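/- arXiv:1709.09699 — 2 statements merged into one kernel-verified Lean document; each statement's English description precedes it below -/
import Mathlib

section
/- Let A be a nonnegative real m×m matrix and u a nonnegative vector in ℝ^m. Let I⁺ be the set of indices i ∈ {1,…,m} such that uᵀ Aᵏ e_i > 0 for some integer k ≥ 0 (equivalently, Σ_{k=0}^{∞} uᵀ Aᵏ e_i > 0), and let A⁺ be the principal submatrix of A with rows and columns restricted to I⁺. Then lim_{n→∞} (uᵀ Aⁿ 𝟏)^{1/n} = ρ(A⁺), where 𝟏 is the all-ones vector (with the conventions that the n-th root of 0 is 0 and that the spectral radius of an empty matrix is 0). -/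
/-!
The row vectors `uᵀAᵏ` vanish outside `I⁺`, so `uᵀAⁿ𝟏 = vᵀBⁿ𝟏` for `B = A⁺` and `v = u|I⁺`,
and now every index of `B` is reached from `v`. For such a pair `vᵀBⁿ𝟏` is comparable to the
`ℓ∞` operator norm `‖Bⁿ‖` up to positive constants. The upper bound is immediate; for the lower
one, the vector `w = ∑_{l<K} vᵀBˡ` is entrywise positive, so for some `c > 0`
`c ‖Bⁿ‖ ≤ wᵀBⁿ𝟏 = ∑_{l<K} (vᵀBⁿ)(Bˡ𝟏) ≤ (vᵀBⁿ𝟏) ∑_{l<K} ‖Bˡ‖`.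
Taking `n`-th roots, Gelfand's formula `‖Bⁿ‖^(1/n) → ρ(B)` gives the limit.
-/

open Matrix Filter

attribute [local instance] Classical.propDecidable

/-- Spectral radius of a real square matrix: the maximum modulus of its complex
eigenvalues (i.e. of the roots of its characteristic polynomial over ℂ),
with the convention that the spectral radius of an empty matrix is `0`. -/
noncomputable def specRad {m : Type*} [Fintype m] [DecidableEq m] (A : Matrix m m ℝ) : ℝ :=
  sSup {r : ℝ | r = 0 ∨ ∃ z ∈ (A.map Complex.ofReal).charpoly.roots, ‖z‖ = r}

open Topology
open scoped ENNReal Matrix.Norms.Operator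

theorem Fintype.sum_subtype_eq_sum_of_forall_not {M ι : Type*} [AddCommMonoid M] [Fintype ι]
    {p : ι → Prop} [DecidablePred p] {f : ι → M} (hf : ∀ i, ¬ p i → f i = 0) :
    ∑ q : Subtype p, f q = ∑ i, f i := by
  rw [← Finset.sum_subtype (Finset.univ.filter p) (by simp)]
  exact Fintype.sum_subset fun i hi => by simpa using not_imp_comm.1 (hf i) hi

namespace Matrix

section Nonneg

variable {R : Type*} [Semiring R] [PartialOrder R] [IsOrderedRing R] {m n : Type*} [Fintype m]

theorem vecMul_apply_nonneg {x : m → R} {M : Matrix m n R} (hx : ∀ i, 0 ≤ x i)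
    (hM : ∀ i j, 0 ≤ M i j) (j : n) : 0 ≤ (x ᵥ* M) j :=
  Finset.sum_nonneg fun i _ => mul_nonneg (hx i) (hM i j)

theorem mulVec_apply_nonneg {x : m → R} {M : Matrix n m R} (hx : ∀ i, 0 ≤ x i)
    (hM : ∀ i j, 0 ≤ M i j) (i : n) : 0 ≤ (M *ᵥ x) i :=
  Finset.sum_nonneg fun j _ => mul_nonneg (hM i j) (hx j)

end Nonneg

section Support

variable {R : Type*} [Semiring R] {m : Type*} [Fintype m] [DecidableEq m]
  {p : m → Prop} [DecidablePred p]

theorem vecMul_submatrix_pow_of_forall_not {A : Matrix m m R} {u : m → R}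
    (hsupp : ∀ k i, ¬ p i → (u ᵥ* A ^ k) i = 0) (k : ℕ) :
    (fun q : Subtype p => u q) ᵥ* (A.submatrix (↑) (↑) : Matrix (Subtype p) (Subtype p) R) ^ k =
      fun q : Subtype p => (u ᵥ* A ^ k) q := by
  induction k with
  | zero => simp
  | succ k ih =>
    ext q
    rw [pow_succ, ← vecMul_vecMul, ih, pow_succ, ← vecMul_vecMul]
    exact Fintype.sum_subtype_eq_sum_of_forall_not (f := fun i => (u ᵥ* A ^ k) i * A i q)
      fun i hi => by rw [hsupp k i hi, zero_mul]

end Support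

section LinftyOpNorm

variable {m n : Type*} [Fintype m] [Fintype n]

theorem linfty_opNorm_map_ofReal (M : Matrix m n ℝ) : ‖M.map Complex.ofReal‖ = ‖M‖ := by
  simp [linfty_opNorm_def]

theorem mulVec_one_apply_le_linfty_opNorm (M : Matrix m n ℝ) (i : m) : (M *ᵥ 1) i ≤ ‖M‖ :=
  calc (M *ᵥ 1) i ≤ ‖M *ᵥ 1‖ := (Real.le_norm_self _).trans (norm_le_pi_norm _ i)
    _ ≤ ‖M‖ * ‖(1 : n → ℝ)‖ := linfty_opNorm_mulVec _ _
    _ ≤ ‖M‖ := mul_le_of_le_one_right (norm_nonneg _) ((pi_norm_const_le (1 : ℝ)).trans norm_one.le)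

theorem dotProduct_mulVec_one_le {x : m → ℝ} (hx : ∀ i, 0 ≤ x i) (M : Matrix m n ℝ) :
    x ⬝ᵥ (M *ᵥ 1) ≤ (x ⬝ᵥ 1) * ‖M‖ := by
  simp only [dotProduct, Pi.one_apply, mul_one, Finset.sum_mul]
  exact Finset.sum_le_sum fun i _ =>
    mul_le_mul_of_nonneg_left (mulVec_one_apply_le_linfty_opNorm M i) (hx i)

theorem linfty_opNorm_le_sum_mulVec_one {M : Matrix m n ℝ} (hM : ∀ i j, 0 ≤ M i j) :
    ‖M‖ ≤ ∑ i, (M *ᵥ 1) i := by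
  have hrows : (Finset.univ.sup fun i => ∑ j, ‖M i j‖₊) ≤ ∑ i, ∑ j, ‖M i j‖₊ :=
    Finset.sup_le fun i _ =>
      Finset.single_le_sum (f := fun i => ∑ j, ‖M i j‖₊) (fun _ _ => zero_le) (Finset.mem_univ i)
  rw [linfty_opNorm_def]
  convert NNReal.coe_le_coe.2 hrows using 1
  simp [mulVec, dotProduct, Real.norm_of_nonneg (hM _ _)]

end LinftyOpNorm

end Matrix

section SpectralRadius

variable {n : Type*} [Fintype n] [DecidableEq n]

theorem specRad_eq_sSup_norm_spectrum (A : Matrix n n ℝ) :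
    specRad A = sSup (insert 0 (norm '' spectrum ℂ (A.map Complex.ofReal))) := by
  rw [specRad]
  congr 1
  ext r
  simp [mem_spectrum_iff_isRoot_charpoly, Polynomial.mem_roots (charpoly_monic _).ne_zero,
    eq_comm]

theorem bddAbove_norm_spectrum (A : Matrix n n ℝ) :
    BddAbove (insert 0 (norm '' spectrum ℂ (A.map Complex.ofReal))) :=
  ((Matrix.finite_spectrum _).image _).insert 0 |>.bddAbove

theorem specRad_nonneg (A : Matrix n n ℝ) : 0 ≤ specRad A :=
  specRad_eq_sSup_norm_spectrum A ▸ le_csSup (bddAbove_norm_spectrum A) (Set.mem_insert 0 _)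

theorem spectralRadius_map_ofReal_le_ofReal_specRad (A : Matrix n n ℝ) :
    spectralRadius ℂ (A.map Complex.ofReal) ≤ ENNReal.ofReal (specRad A) := by
  refine iSup₂_le fun z hz => ?_
  rw [← ENNReal.ofReal_coe_nnreal, coe_nnnorm]
  exact ENNReal.ofReal_le_ofReal <| specRad_eq_sSup_norm_spectrum A ▸
    le_csSup (bddAbove_norm_spectrum A) (Set.mem_insert_of_mem _ ⟨z, hz, rfl⟩)

theorem specRad_eq_toReal_spectralRadius (A : Matrix n n ℝ) :
    specRad A = (spectralRadius ℂ (A.map Complex.ofReal)).toReal := by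
  have hne := ne_top_of_le_ne_top ENNReal.ofReal_ne_top
    (spectralRadius_map_ofReal_le_ofReal_specRad A)
  refine le_antisymm ?_ ?_
  · rw [specRad_eq_sSup_norm_spectrum]
    refine csSup_le (Set.insert_nonempty _ _) ?_
    rintro r (rfl | ⟨z, hz, rfl⟩)
    · exact ENNReal.toReal_nonneg
    · exact (ENNReal.ofReal_le_iff_le_toReal hne).1 (by
        rw [← coe_nnnorm, ENNReal.ofReal_coe_nnreal]
        exact le_iSup₂ (f := fun k (_ : k ∈ spectrum ℂ (A.map Complex.ofReal)) => (‖k‖₊ : ℝ≥0∞))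
          z hz)
  · exact ENNReal.toReal_le_of_le_ofReal (specRad_nonneg A)
      (spectralRadius_map_ofReal_le_ofReal_specRad A)

theorem tendsto_linfty_opNorm_pow_rpow_specRad (A : Matrix n n ℝ) :
    Tendsto (fun k : ℕ => ‖A ^ k‖ ^ (1 / (k : ℝ))) atTop (𝓝 (specRad A)) := by
  have hne := ne_top_of_le_ne_top ENNReal.ofReal_ne_top
    (spectralRadius_map_ofReal_le_ofReal_specRad A)
  rw [specRad_eq_toReal_spectralRadius]
  refine ((ENNReal.tendsto_toReal hne).comp
    (spectrum.pow_nnnorm_pow_one_div_tendsto_nhds_spectralRadius _)).congr fun k => ?_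
  have hpow : A.map Complex.ofReal ^ k = (A ^ k).map Complex.ofReal :=
    (A.map_pow Complex.ofRealHom k).symm
  rw [Function.comp_apply, ← ENNReal.toReal_rpow, ENNReal.coe_toReal, coe_nnnorm, hpow,
    linfty_opNorm_map_ofReal]

end SpectralRadius

theorem tendsto_rpow_one_div_of_le_of_le {f g : ℕ → ℝ} {c₁ c₂ L : ℝ} (hc₁ : 0 < c₁)
    (hc₂ : 0 < c₂) (hf : ∀ k, 0 ≤ f k) (h₁ : ∀ k, c₁ * f k ≤ g k) (h₂ : ∀ k, g k ≤ c₂ * f k)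
    (hL : Tendsto (fun k : ℕ => f k ^ (1 / (k : ℝ))) atTop (𝓝 L)) :
    Tendsto (fun k : ℕ => g k ^ (1 / (k : ℝ))) atTop (𝓝 L) := by
  have hmul : ∀ c : ℝ, 0 < c → Tendsto (fun k : ℕ => (c * f k) ^ (1 / (k : ℝ))) atTop (𝓝 L) := by
    intro c hc
    simp_rw [Real.mul_rpow hc.le (hf _)]
    simpa using (tendsto_const_nhds.rpow tendsto_one_div_atTop_nhds_zero_nat
      (Or.inl hc.ne')).mul hL
  refine tendsto_of_tendsto_of_tendsto_of_le_of_le (hmul c₁ hc₁) (hmul c₂ hc₂)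
    (fun k => ?_) (fun k => ?_)
  · exact Real.rpow_le_rpow (mul_nonneg hc₁.le (hf k)) (h₁ k) (by positivity)
  · exact Real.rpow_le_rpow ((mul_nonneg hc₁.le (hf k)).trans (h₁ k)) (h₂ k) (by positivity)

section Reachable

variable {n : Type*} [Fintype n] [DecidableEq n] {B : Matrix n n ℝ} {v : n → ℝ}

theorem exists_pos_le_sum_vecMul_pow (hB : ∀ i j, 0 ≤ B i j) (hv : ∀ i, 0 ≤ v i)
    (hreach : ∀ j, ∃ k : ℕ, 0 < (v ᵥ* B ^ k) j) :
    ∃ K : ℕ, ∃ c > 0, ∀ j, c ≤ ∑ l ∈ Finset.range K, (v ᵥ* B ^ l) j := by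
  choose k hk using hreach
  obtain ⟨K, hK⟩ := Finite.exists_le k
  have hpos : ∀ j, 0 < ∑ l ∈ Finset.range (K + 1), (v ᵥ* B ^ l) j := fun j =>
    Finset.sum_pos' (fun l _ => vecMul_apply_nonneg hv (pow_apply_nonneg hB l) j)
      ⟨k j, Finset.mem_range_succ_iff.2 (hK j), hk j⟩
  obtain ⟨⟨c, hc⟩, hcle⟩ := Finite.exists_ge fun j => (⟨_, hpos j⟩ : Set.Ioi (0 : ℝ))
  exact ⟨K + 1, c, hc, fun j => hcle j⟩

theorem exists_pos_mul_linfty_opNorm_pow_le (hB : ∀ i j, 0 ≤ B i j) (hv : ∀ i, 0 ≤ v i)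
    (hreach : ∀ j, ∃ k : ℕ, 0 < (v ᵥ* B ^ k) j) :
    ∃ c > 0, ∀ k : ℕ, c * ‖B ^ k‖ ≤ v ⬝ᵥ (B ^ k *ᵥ 1) := by
  obtain ⟨K, c, hc, hcw⟩ := exists_pos_le_sum_vecMul_pow hB hv hreach
  set D := ∑ l ∈ Finset.range K, ‖B ^ l‖
  have hD : 0 ≤ D := Finset.sum_nonneg fun l _ => norm_nonneg _
  -- `D + 1` rather than `D`, which vanishes when `n` is empty
  refine ⟨c / (D + 1), by positivity, fun k => ?_⟩
  have hBk := pow_apply_nonneg hB k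
  have hswap : ∀ l, (v ᵥ* B ^ l) ⬝ᵥ (B ^ k *ᵥ 1) = (v ᵥ* B ^ k) ⬝ᵥ (B ^ l *ᵥ 1) := fun l => by
    rw [← dotProduct_mulVec, mulVec_mulVec, ← pow_add, add_comm, pow_add, ← mulVec_mulVec,
      dotProduct_mulVec]
  have key : c * ‖B ^ k‖ ≤ (v ⬝ᵥ (B ^ k *ᵥ 1)) * D :=
    calc c * ‖B ^ k‖ ≤ c * ∑ i, (B ^ k *ᵥ 1) i :=
          mul_le_mul_of_nonneg_left (linfty_opNorm_le_sum_mulVec_one hBk) hc.le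
      _ ≤ ∑ i, (∑ l ∈ Finset.range K, (v ᵥ* B ^ l) i) * (B ^ k *ᵥ 1) i := by
          rw [Finset.mul_sum]
          exact Finset.sum_le_sum fun i _ => mul_le_mul_of_nonneg_right (hcw i)
            (mulVec_apply_nonneg (fun _ => zero_le_one) hBk i)
      _ = ∑ l ∈ Finset.range K, (v ᵥ* B ^ k) ⬝ᵥ (B ^ l *ᵥ 1) := by
          simp_rw [Finset.sum_mul, ← hswap]
          exact Finset.sum_comm
      _ ≤ ∑ l ∈ Finset.range K, ((v ᵥ* B ^ k) ⬝ᵥ 1) * ‖B ^ l‖ :=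
          Finset.sum_le_sum fun l _ =>
            dotProduct_mulVec_one_le (vecMul_apply_nonneg hv hBk) _
      _ = (v ⬝ᵥ (B ^ k *ᵥ 1)) * D := by rw [← Finset.mul_sum, dotProduct_mulVec]
  have hs : 0 ≤ v ⬝ᵥ (B ^ k *ᵥ 1) := Finset.sum_nonneg fun i _ =>
    mul_nonneg (hv i) (mulVec_apply_nonneg (fun _ => zero_le_one) hBk i)
  rw [div_mul_eq_mul_div, div_le_iff₀ (by positivity)]
  nlinarith

theorem tendsto_dotProduct_pow_mulVec_one_rpow_specRad (hB : ∀ i j, 0 ≤ B i j)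
    (hv : ∀ i, 0 ≤ v i) (hreach : ∀ j, ∃ k : ℕ, 0 < (v ᵥ* B ^ k) j) :
    Tendsto (fun k : ℕ => (v ⬝ᵥ (B ^ k *ᵥ 1)) ^ (1 / (k : ℝ))) atTop (𝓝 (specRad B)) := by
  obtain ⟨c, hc, hlower⟩ := exists_pos_mul_linfty_opNorm_pow_le hB hv hreach
  have hv1 : 0 ≤ v ⬝ᵥ 1 := Finset.sum_nonneg fun i _ => by simpa using hv i
  refine tendsto_rpow_one_div_of_le_of_le hc (by linarith : 0 < v ⬝ᵥ 1 + 1)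
    (fun k => norm_nonneg _) hlower (fun k => ?_) (tendsto_linfty_opNorm_pow_rpow_specRad B)
  exact (dotProduct_mulVec_one_le hv _).trans
    (mul_le_mul_of_nonneg_right (le_add_of_nonneg_right zero_le_one) (norm_nonneg _))

end Reachable

/-- Weighted element sum of matrix powers: if `A` is nonnegative and `u` is a
nonnegative vector, then `(uᵀ Aⁿ 𝟏)^(1/n)` converges to the spectral radius of the
principal submatrix `A⁺` of `A` on the set `I⁺` of indices `i` with
`uᵀ Aᵏ e_i > 0` for some `k ≥ 0`. -/
theorem weighted_element_sum_of_matrix_powers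
    {m : Type*} [Fintype m] [DecidableEq m]
    (A : Matrix m m ℝ) (u : m → ℝ)
    (hA : ∀ i j, 0 ≤ A i j) (hu : ∀ i, 0 ≤ u i) :
    Tendsto (fun n : ℕ => (u ⬝ᵥ ((A ^ n) *ᵥ fun _ => (1 : ℝ))) ^ (1 / (n : ℝ)))
      atTop
      (nhds (specRad (A.submatrix
        (fun p : {i : m // ∃ k : ℕ, 0 < Matrix.vecMul u (A ^ k) i} => (p : m))
        (fun p : {i : m // ∃ k : ℕ, 0 < Matrix.vecMul u (A ^ k) i} => (p : m))))) := by
  set P : m → Prop := fun i => ∃ k : ℕ, 0 < (u ᵥ* A ^ k) i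
  have hsupp : ∀ k i, ¬ P i → (u ᵥ* A ^ k) i = 0 := fun k i hi =>
    le_antisymm (not_lt.1 fun h => hi ⟨k, h⟩) (vecMul_apply_nonneg hu (pow_apply_nonneg hA k) i)
  have hrestrict := vecMul_submatrix_pow_of_forall_not hsupp
  have hsum : ∀ k : ℕ, u ⬝ᵥ (A ^ k *ᵥ fun _ => 1) =
      (fun q : Subtype P => u q) ⬝ᵥ
        ((A.submatrix (↑) (↑) : Matrix (Subtype P) (Subtype P) ℝ) ^ k *ᵥ 1) := fun k => by
    rw [dotProduct_mulVec, dotProduct_mulVec, hrestrict k]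
    exact (Fintype.sum_subtype_eq_sum_of_forall_not fun i hi => by simp [hsupp k i hi]).symm
  simp_rw [hsum]
  exact tendsto_dotProduct_pow_mulVec_one_rpow_specRad (fun _ _ => hA _ _) (fun _ => hu _)
    fun q => by simpa [hrestrict] using q.2
end

section
/- Let an HMM over finite sets 𝒳, 𝒵 be given by transition matrix P, emission matrix E and initial distribution π, and let α ≥ 2 be an integer. Then for every n ≥ 1, the collision sum of the observed word distribution satisfies Σ_{z ∈ 𝒵ⁿ} p(z)^α = vᵀ · (M^{⊗α}_𝒞)^{n−1} · 𝟏, and consequently the Rényi entropy of the length-n observed word is H_α(Z₁ⁿ) = (1/(1−α)) · log₂( vᵀ · (M^{⊗α}_𝒞)^{n−1} · 𝟏 ). -/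
/-! `p(z)^α` expands into a sum over `α`-tuples of hidden paths that all emit the same word `z`.
Bundling such a tuple with `z` gives a path in the collision set `𝒞`, and its weight factorises
as `v` at the start times the entries of `M^{⊗α}_𝒞` along the path. Summing over all words and
tuples is therefore the sum over all paths of length `n` in `𝒞`, which is the path-sum expansion
of `vᵀ (M^{⊗α}_𝒞)ⁿ 𝟏`. -/

open Matrix Finset

/-- The collision set `𝒞 ⊆ (𝒳×𝒵)^α`: tuples whose `𝒵`-components all agree. -/
abbrev Coll (X Z : Type*) (α : ℕ) : Type _ :=
  {t : Fin α → X × Z // ∀ j j', (t j).2 = (t j').2}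

/-- The joint-chain matrix `M((x,z),(x',z')) = P(x,x') · E(x',z')`. -/
def jointM {X Z : Type*} (P : Matrix X X ℝ) (E : Matrix X Z ℝ) :
    Matrix (X × Z) (X × Z) ℝ :=
  fun p q => P p.1 q.1 * E q.1 q.2

/-- The α-fold Kronecker tensor power of the joint-chain matrix, restricted to the
collision set `𝒞` (rows and columns in `𝒞`). -/
def tensRestr {X Z : Type*} (P : Matrix X X ℝ) (E : Matrix X Z ℝ) (α : ℕ) :
    Matrix (Coll X Z α) (Coll X Z α) ℝ :=
  fun s s' => ∏ j, jointM P E (s.1 j) (s'.1 j)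

/-- The initial vector `v` on `𝒞`: `v((x⁽¹⁾,z⁽¹⁾),…) = ∏ⱼ π(x⁽ʲ⁾)·E(x⁽ʲ⁾,z⁽ʲ⁾)`. -/
def vinit {X Z : Type*} (E : Matrix X Z ℝ) (π : X → ℝ) (α : ℕ) : Coll X Z α → ℝ :=
  fun t => ∏ j, π (t.1 j).1 * E (t.1 j).1 (t.1 j).2

/-- The probability of the observed word `z = (z₁,…,z_{n+1})` under the HMM. -/
def hmmWordProb {X Z : Type*} [Fintype X]
    (P : Matrix X X ℝ) (E : Matrix X Z ℝ) (π : X → ℝ) (n : ℕ)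
    (z : Fin (n + 1) → Z) : ℝ :=
  ∑ x : Fin (n + 1) → X,
    (π (x 0) * E (x 0) (z 0)) *
      ∏ i : Fin n, P (x i.castSucc) (x i.succ) * E (x i.succ) (z i.succ)

theorem dotProduct_pow_mulVec_one_eq_sum_paths {S R : Type*} [Fintype S] [DecidableEq S]
    [CommSemiring R] (A : Matrix S S R) (n : ℕ) (w : S → R) :
    w ⬝ᵥ (A ^ n *ᵥ fun _ => 1) =
      ∑ s : Fin (n + 1) → S, w (s 0) * ∏ i : Fin n, A (s i.castSucc) (s i.succ) := by
  induction n generalizing w with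
  | zero =>
    rw [pow_zero, one_mulVec, ← (Equiv.funUnique (Fin 1) S).symm.sum_comp
      fun s => w (s 0) * ∏ i : Fin 0, A (s i.castSucc) (s i.succ)]
    simp [dotProduct]
  | succ n ih =>
    rw [pow_succ', ← mulVec_mulVec, dotProduct_mulVec, ih,
      ← (Fin.consEquiv fun _ => S).sum_comp
        fun s => w (s 0) * ∏ i : Fin (n + 1), A (s i.castSucc) (s i.succ),
      Fintype.sum_prod_type, sum_comm]
    refine sum_congr rfl fun s _ => ?_
    simp only [vecMul, dotProduct, sum_mul]
    refine sum_congr rfl fun t _ => ?_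
    simp only [Fin.prod_univ_succ, Fin.consEquiv_apply, Fin.cons_zero, Fin.cons_succ,
      Fin.castSucc_zero, ← Fin.succ_castSucc]
    ring

def Coll.pathEquiv (X Z : Type*) {α : ℕ} (hα : 0 < α) (m : ℕ) :
    (Fin α → Fin m → X) × (Fin m → Z) ≃ (Fin m → Coll X Z α) where
  toFun p i := ⟨fun j => (p.1 j i, p.2 i), fun _ _ => rfl⟩
  invFun s := (fun j i => ((s i).1 j).1, fun i => ((s i).1 ⟨0, hα⟩).2)
  left_inv _ := rfl
  right_inv s := funext fun i => Subtype.ext <| funext fun j => Prod.ext rfl ((s i).2 _ j)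

section HMM

variable {X Z : Type*} [Fintype X] (P : Matrix X X ℝ) (E : Matrix X Z ℝ) (π : X → ℝ)

theorem hmmWordProb_eq_sum_paths (n : ℕ) (z : Fin (n + 1) → Z) :
    hmmWordProb P E π n z =
      ∑ x : Fin (n + 1) → X, π (x 0) * E (x 0) (z 0) *
        ∏ i : Fin n, jointM P E (x i.castSucc, z i.castSucc) (x i.succ, z i.succ) :=
  rfl

theorem hmmWordProb_pow_eq_sum_tuples (α n : ℕ) (z : Fin (n + 1) → Z) :
    hmmWordProb P E π n z ^ α =
      ∑ x : Fin α → Fin (n + 1) → X, ∏ j, π (x j 0) * E (x j 0) (z 0) *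
        ∏ i : Fin n, jointM P E (x j i.castSucc, z i.castSucc) (x j i.succ, z i.succ) := by
  rw [← Fin.prod_const, hmmWordProb_eq_sum_paths, prod_univ_sum, Fintype.piFinset_univ]

variable [Fintype Z] [DecidableEq X] [DecidableEq Z]

theorem sum_hmmWordProb_pow_eq_dotProduct {α : ℕ} (hα : 0 < α) (n : ℕ) :
    ∑ z : Fin (n + 1) → Z, hmmWordProb P E π n z ^ α =
      vinit E π α ⬝ᵥ (tensRestr P E α ^ n *ᵥ fun _ => 1) := by
  rw [dotProduct_pow_mulVec_one_eq_sum_paths, ← (Coll.pathEquiv X Z hα (n + 1)).sum_comp,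
    Fintype.sum_prod_type, sum_comm]
  refine sum_congr rfl fun z _ => ?_
  rw [hmmWordProb_pow_eq_sum_tuples]
  refine sum_congr rfl fun x _ => ?_
  simp only [Coll.pathEquiv, Equiv.coe_fn_mk, vinit, tensRestr]
  rw [prod_mul_distrib, prod_comm]

end HMM

theorem hmm_renyi_finite_length_general
    {X Z : Type*} [Fintype X] [Fintype Z] [DecidableEq X] [DecidableEq Z]
    (P : Matrix X X ℝ) (E : Matrix X Z ℝ) (π : X → ℝ)
    (α : ℕ) (hα : 2 ≤ α) (n : ℕ) :
    (∑ z : Fin (n + 1) → Z, hmmWordProb P E π n z ^ α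
        = vinit E π α ⬝ᵥ ((tensRestr P E α ^ n) *ᵥ fun _ => (1 : ℝ))) ∧
    (1 / (1 - (α : ℝ))) * Real.logb 2 (∑ z : Fin (n + 1) → Z, hmmWordProb P E π n z ^ α)
        = (1 / (1 - (α : ℝ))) *
            Real.logb 2 (vinit E π α ⬝ᵥ ((tensRestr P E α ^ n) *ᵥ fun _ => (1 : ℝ))) := by
  have collision_sum := sum_hmmWordProb_pow_eq_dotProduct P E π (by omega : 0 < α) n
  exact ⟨collision_sum, by rw [collision_sum]⟩

/-- Rényi entropy (of integer order `α ≥ 2`) of finite-length realizations of an HMM: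
for every word length `n+1 ≥ 1`, the collision sum of the observed word distribution is
`vᵀ · (M^{⊗α}_𝒞)ⁿ · 𝟏` and consequently
`H_α(Z₁^{n+1}) = (1/(1−α)) · log₂ (vᵀ · (M^{⊗α}_𝒞)ⁿ · 𝟏)`. -/
theorem hmm_renyi_finite_length
    {X Z : Type*} [Fintype X] [Fintype Z] [DecidableEq X] [DecidableEq Z]
    (P : Matrix X X ℝ) (E : Matrix X Z ℝ) (π : X → ℝ)
    (hP0 : ∀ x x', 0 ≤ P x x') (hP1 : ∀ x, ∑ x', P x x' = 1)
    (hE0 : ∀ x z, 0 ≤ E x z) (hE1 : ∀ x, ∑ z, E x z = 1)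
    (hπ0 : ∀ x, 0 ≤ π x) (hπ1 : ∑ x, π x = 1)
    (α : ℕ) (hα : 2 ≤ α) (n : ℕ) :
    (∑ z : Fin (n + 1) → Z, hmmWordProb P E π n z ^ α
        = vinit E π α ⬝ᵥ ((tensRestr P E α ^ n) *ᵥ fun _ => (1 : ℝ))) ∧
    (1 / (1 - (α : ℝ))) * Real.logb 2 (∑ z : Fin (n + 1) → Z, hmmWordProb P E π n z ^ α)
        = (1 / (1 - (α : ℝ))) *
            Real.logb 2 (vinit E π α ⬝ᵥ ((tensRestr P E α ^ n) *ᵥ fun _ => (1 : ℝ))) :=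
  hmm_renyi_finite_length_general P E π α hα n
end
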